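/- arXiv:2306.05081 — 3 statements merged into one kernel-verified Lean document; each statement's English description precedes it below -/
import Mathlib

section
/- Let a, b > 0 and let x : [0,∞) → ℝ be differentiable with x'(t) = -a x(t)^2 + b for all t ≥ 0 and x(0) = x_0 > sqrt(b/a). Then for every t_0 > 0 there exists a constant C = C(a, b, t_0) (independent of x_0) such that x(t) ≤ C for all t ≥ t_0. -/
open Set Filter Topology

private lemma riccati_aux (a b C : ℝ) (ha : 0 < a) (hb : 0 < b) (hC : 0 < C) (hC2 : b / C ^ 2 ≤ a / 2)
    (x : ℝ → ℝ) (s₁ t : ℝ) (hs₁ : 0 ≤ s₁) (hst : s₁ ≤ t)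
    (hderiv : ∀ s : ℝ, 0 ≤ s → HasDerivAt x (-a * (x s) ^ 2 + b) s)
    (hbound : ∀ s ∈ Icc s₁ t, C ≤ x s) :
    (x s₁)⁻¹ + a / 2 * (t - s₁) ≤ (x t)⁻¹ := by
  set g : ℝ → ℝ := fun s => (x s)⁻¹ - a / 2 * s with hg
  have hxpos : ∀ s ∈ Icc s₁ t, 0 < x s := fun s hs => lt_of_lt_of_le hC (hbound s hs)
  have hgderiv : ∀ s ∈ Icc s₁ t,
      HasDerivAt g (-(-a * (x s) ^ 2 + b) / (x s) ^ 2 - a / 2) s := by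
    intro s hs
    have hne : x s ≠ 0 := ne_of_gt (hxpos s hs)
    have h1 : HasDerivAt (fun u => (x u)⁻¹) (-(-a * (x s) ^ 2 + b) / (x s) ^ 2) s :=
      (hderiv s (hs₁.trans hs.1)).inv hne
    have h2 : HasDerivAt (fun u : ℝ => a / 2 * u) (a / 2) s := by
      simpa using (hasDerivAt_id s).const_mul (a / 2)
    exact h1.sub h2
  have hmono : MonotoneOn g (Icc s₁ t) := by
    apply monotoneOn_of_deriv_nonneg (convex_Icc s₁ t)
    · exact fun s hs => (hgderiv s hs).continuousAt.continuousWithinAt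
    · intro s hs
      rw [interior_Icc] at hs
      exact ((hgderiv s (Ioo_subset_Icc_self hs)).differentiableAt).differentiableWithinAt
    · intro s hs
      rw [interior_Icc] at hs
      have hs' := Ioo_subset_Icc_self hs
      rw [(hgderiv s hs').deriv]
      have hxs : 0 < x s := hxpos s hs'
      have hxsC : C ≤ x s := hbound s hs'
      have hsq : C ^ 2 ≤ (x s) ^ 2 := by nlinarith
      have hdivle : b / (x s) ^ 2 ≤ b / C ^ 2 :=
        div_le_div_of_nonneg_left hb.le (by positivity) hsq
      have key : -(-a * (x s) ^ 2 + b) / (x s) ^ 2 = a - b / (x s) ^ 2 := by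
        field_simp; ring
      rw [key]
      linarith [hdivle.trans hC2]
  have := hmono (left_mem_Icc.2 hst) (right_mem_Icc.2 hst) hst
  simp only [hg] at this
  linarith

theorem riccati_instantaneous_bound (a b t₀ : ℝ) (ha : 0 < a) (hb : 0 < b) (ht₀ : 0 < t₀) :
    ∃ C : ℝ, ∀ (x₀ : ℝ) (x : ℝ → ℝ),
      Real.sqrt (b / a) < x₀ →
      (∀ t : ℝ, 0 ≤ t → HasDerivAt x (-a * (x t) ^ 2 + b) t) →
      x 0 = x₀ →
      ∀ t : ℝ, t₀ ≤ t → x t ≤ C := by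
  set C : ℝ := max (Real.sqrt (2 * b / a)) (2 / (a * t₀)) with hCdef
  have hCpos : 0 < C := lt_of_lt_of_le (by positivity) (le_max_right _ _)
  have hCsq : 2 * b / a ≤ C ^ 2 := by
    have h1 : Real.sqrt (2 * b / a) ≤ C := le_max_left _ _
    have h2 : Real.sqrt (2 * b / a) ^ 2 = 2 * b / a := Real.sq_sqrt (by positivity)
    nlinarith [Real.sqrt_nonneg (2 * b / a)]
  have hC2 : b / C ^ 2 ≤ a / 2 := by
    rw [div_le_iff₀ (by positivity)]
    have : 2 * b ≤ a * C ^ 2 := by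
      rw [div_le_iff₀ ha] at hCsq; linarith
    linarith
  refine ⟨C, fun x₀ x hx₀ hderiv hx0 t ht => ?_⟩
  have ht0 : 0 ≤ t := le_of_lt (lt_of_lt_of_le ht₀ ht)
  by_contra hC
  push_neg at hC
  have hx₀pos : 0 < x₀ := lt_of_le_of_lt (Real.sqrt_nonneg _) hx₀
  set S : Set ℝ := {s ∈ Icc 0 t | x s ≤ C} with hSdef
  rcases eq_empty_or_nonempty S with hS | hS
  · -- x > C on all of [0, t]
    have hbound : ∀ s ∈ Icc 0 t, C ≤ x s := by
      intro s hs
      by_contra h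
      push_neg at h
      exact (eq_empty_iff_forall_notMem.1 hS s) ⟨hs, le_of_lt h⟩
    have key := riccati_aux a b C ha hb hCpos hC2 x 0 t le_rfl ht0 hderiv hbound
    have hx0inv : 0 ≤ (x 0)⁻¹ := by rw [hx0]; positivity
    have hxt : 0 < x t := lt_of_lt_of_le hCpos (hbound t (right_mem_Icc.2 ht0))
    have h1 : a / 2 * t₀ ≤ (x t)⁻¹ := by nlinarith
    have h2 : x t ≤ (a / 2 * t₀)⁻¹ := by
      rw [← inv_inv (x t)]
      exact inv_anti₀ (by positivity) h1
    have h3 : (a / 2 * t₀)⁻¹ = 2 / (a * t₀) := by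
      rw [eq_div_iff (by positivity)]
      field_simp
    have : x t ≤ C := h2.trans (h3 ▸ le_max_right _ _)
    linarith
  · -- S nonempty; let s* be its sup
    have hcont : ContinuousOn x (Icc 0 t) :=
      fun s hs => ((hderiv s hs.1).continuousAt).continuousWithinAt
    have hSclosed : IsClosed S :=
      hcont.preimage_isClosed_of_isClosed isClosed_Icc isClosed_Iic
    have hSbdd : BddAbove S := ⟨t, fun s hs => hs.1.2⟩
    set s₁ : ℝ := sSup S with hs₁def
    have hs₁S : s₁ ∈ S := hSclosed.csSup_mem hS hSbdd
    obtain ⟨⟨hs₁0, hs₁t⟩, hxs₁⟩ := hs₁S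
    have hs₁lt : s₁ < t := by
      rcases lt_or_eq_of_le hs₁t with h | h
      · exact h
      · exfalso; rw [h] at hxs₁; linarith
    have hgt : ∀ s, s₁ < s → s ≤ t → C < x s := by
      intro s hs hst
      by_contra h
      push_neg at h
      have : s ∈ S := ⟨⟨le_trans hs₁0 (le_of_lt hs), hst⟩, h⟩
      exact absurd (le_csSup hSbdd this) (not_le.2 hs)
    -- x s₁ ≥ C by right continuity
    have hxs₁ge : C ≤ x s₁ := by
      have hne : (𝓝[Ioo s₁ t] s₁).NeBot := left_nhdsWithin_Ioo_neBot hs₁lt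
      have htend : Filter.Tendsto x (𝓝[Ioo s₁ t] s₁) (𝓝 (x s₁)) :=
        ((hderiv s₁ hs₁0).continuousAt).continuousWithinAt
      refine ge_of_tendsto htend ?_
      filter_upwards [self_mem_nhdsWithin] with s hs
      exact le_of_lt (hgt s hs.1 (le_of_lt hs.2))
    have hbound : ∀ s ∈ Icc s₁ t, C ≤ x s := by
      intro s hs
      rcases eq_or_lt_of_le hs.1 with h | h
      · rw [← h]; exact hxs₁ge
      · exact le_of_lt (hgt s h hs.2)
    have key := riccati_aux a b C ha hb hCpos hC2 x s₁ t hs₁0 (le_of_lt hs₁lt) hderiv hbound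
    have hxs₁eq : x s₁ = C := le_antisymm hxs₁ hxs₁ge
    have hxt : 0 < x t := lt_of_lt_of_le hCpos (hbound t (right_mem_Icc.2 (le_of_lt hs₁lt)))
    have h1 : C⁻¹ ≤ (x t)⁻¹ := by
      rw [← hxs₁eq]
      nlinarith [le_of_lt hs₁lt]
    have : x t ≤ C := by
      rw [← inv_inv (x t), ← inv_inv C]
      exact inv_anti₀ (by positivity) h1
    linarith
end

section
/- Let X be a metric space, {S(t)}_{t≥0} a semigroup of Borel measurable maps on X, μ_0 a Borel probability measure on X that is tight (i.e., for every n there is a compact K^n with μ_0(K^n) ≥ 1 - 1/n), and A ⊆ X a set with the attraction property: for every compact K ⊆ X and every δ > 0 there exists t_0 = t_0(K, δ) such that S(t)K ⊆ A_δ for all t ≥ t_0, where A_δ is the open δ-enlargement of A. Define the time-averaged measures μ̄^j(B) := (1/t^j) ∫_0^{t^j} μ_0(S(t)^{-1} B) dt for a sequence t^j → ∞. Then for every δ > 0 and n ∈ ℕ, liminf_{j→∞} μ̄^j(A_δ) ≥ 1 - 1/n; in particular the family (μ̄^j) is asymptotically tight if A has compact closure. -/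
open MeasureTheory Filter Set Topology

theorem time_averages_asymptotically_tight {X : Type*} [MetricSpace X]
    [MeasurableSpace X] [BorelSpace X]
    (S : ℝ → X → X)
    (hmeas : ∀ t : ℝ, 0 ≤ t → Measurable (S t))
    (hS0 : S 0 = id)
    (hsemi : ∀ s t : ℝ, 0 ≤ s → 0 ≤ t → S (s + t) = S s ∘ S t)
    (μ₀ : Measure X) [IsProbabilityMeasure μ₀]
    (K : ℕ → Set X) (hKcomp : ∀ n, IsCompact (K n))
    (hKmass : ∀ n : ℕ, (1 : ENNReal) - (n : ENNReal)⁻¹ ≤ μ₀ (K n))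
    (A : Set X)
    (hattr : ∀ (B : Set X), IsCompact B → ∀ δ : ℝ, 0 < δ → ∃ t₀ : ℝ, ∀ t : ℝ, t₀ ≤ t →
      S t '' B ⊆ {x : X | EMetric.infEdist x A < ENNReal.ofReal δ})
    (tj : ℕ → ℝ) (htjpos : ∀ j, 0 < tj j) (htj : Tendsto tj atTop atTop) :
    ∀ δ : ℝ, 0 < δ → ∀ n : ℕ,
      (1 : ENNReal) - (n : ENNReal)⁻¹ ≤
        liminf (fun j =>
          (∫⁻ t in Set.Icc 0 (tj j),
            μ₀ (S t ⁻¹' {x : X | EMetric.infEdist x A < ENNReal.ofReal δ}) ∂volume) /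
            ENNReal.ofReal (tj j)) atTop := by
  intro δ hδ n
  set U : Set X := {x : X | EMetric.infEdist x A < ENNReal.ofReal δ} with hU
  set c : ENNReal := 1 - (n : ENNReal)⁻¹ with hc
  obtain ⟨t₀, ht₀⟩ := hattr (K n) (hKcomp n) δ hδ
  set T := max t₀ 0 with hT
  have hTnn : 0 ≤ T := le_max_right _ _
  have hmem : ∀ t : ℝ, T ≤ t → c ≤ μ₀ (S t ⁻¹' U) := by
    intro t ht
    refine le_trans (hKmass n) (measure_mono ?_)
    exact Set.image_subset_iff.mp (ht₀ t (le_trans (le_max_left _ _) ht))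
  have key : ∀ j, T ≤ tj j →
      c * ENNReal.ofReal ((tj j - T) / tj j) ≤
      (∫⁻ t in Set.Icc 0 (tj j), μ₀ (S t ⁻¹' U) ∂volume) / ENNReal.ofReal (tj j) := by
    intro j hj
    have h1 : ∫⁻ t in Set.Icc T (tj j), μ₀ (S t ⁻¹' U) ∂volume ≤
        ∫⁻ t in Set.Icc 0 (tj j), μ₀ (S t ⁻¹' U) ∂volume :=
      lintegral_mono_set (Set.Icc_subset_Icc_left hTnn)
    have h2 : c * ENNReal.ofReal (tj j - T) ≤
        ∫⁻ t in Set.Icc T (tj j), μ₀ (S t ⁻¹' U) ∂volume := by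
      calc c * ENNReal.ofReal (tj j - T)
          = ∫⁻ _ in Set.Icc T (tj j), c ∂volume := by
            rw [setLIntegral_const, Real.volume_Icc]
        _ ≤ _ := setLIntegral_mono' measurableSet_Icc fun t ht => hmem t ht.1
    have h3 : ENNReal.ofReal ((tj j - T) / tj j)
        = ENNReal.ofReal (tj j - T) / ENNReal.ofReal (tj j) :=
      ENNReal.ofReal_div_of_pos (htjpos j)
    rw [h3, ← mul_div_assoc]
    exact le_trans (ENNReal.div_le_div_right h2 _) (ENNReal.div_le_div_right h1 _)
  have hlim : Tendsto (fun j => c * ENNReal.ofReal ((tj j - T) / tj j)) atTop (𝓝 c) := by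
    have h1 : Tendsto (fun j => (tj j - T) / tj j) atTop (𝓝 1) := by
      have h0 : Tendsto (fun j => 1 - T / tj j) atTop (𝓝 (1 - 0)) :=
        tendsto_const_nhds.sub (Tendsto.div_atTop tendsto_const_nhds htj)
      have heq : ∀ j, 1 - T / tj j = (tj j - T) / tj j := by
        intro j
        rw [sub_div, div_self (htjpos j).ne']
      simpa using h0.congr heq
    have h2 : Tendsto (fun j => ENNReal.ofReal ((tj j - T) / tj j)) atTop
        (𝓝 (ENNReal.ofReal 1)) := ENNReal.tendsto_ofReal h1
    have h3 := ENNReal.Tendsto.const_mul h2 (a := c)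
      (Or.inl (by simp [ENNReal.ofReal_one]))
    simpa [ENNReal.ofReal_one] using h3
  calc c = liminf (fun j => c * ENNReal.ofReal ((tj j - T) / tj j)) atTop :=
        hlim.liminf_eq.symm
    _ ≤ _ := by
        refine liminf_le_liminf ?_
        filter_upwards [htj.eventually_ge_atTop T] with j hj
        exact key j hj
end

section
/- Let 2 < p < ∞ and let (ω_n) be a sequence in L^1(ℝ²) ∩ L^p(ℝ²), bounded in both norms, converging strongly to ω in L^2(ℝ²). Then |ω_n|^{p-2} → |ω|^{p-2} strongly in L^{(p-1)/(p-2)}(ℝ²), and if additionally ω_n ⇀ ω weakly in L^{p-1}(ℝ²), then ω_n|ω_n|^{p-2} ⇀ ω|ω|^{p-2} weakly in L^{p/(p-1)}(ℝ²) (i.e., ∫ ω_n|ω_n|^{p-2} φ dx → ∫ ω|ω|^{p-2} φ dx for all φ ∈ L^p(ℝ²)). -/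
/-!
Interpolating the uniform `L¹ ∩ Lᵖ` bounds against the `L²` convergence gives `ωₙ → ω` in `Lᵖ⁻¹`
and a uniform `Lᵖ⁻¹` bound. The pointwise estimates `||a|^α - |b|^α| ≤ |a - b|^α` for `α ≤ 1`
and `||a|^α - |b|^α| ≤ α (|a|^(α-1) + |b|^(α-1)) |a - b|` for `α > 1`, combined with Hölder,
turn this into `|ωₙ|^(p-2) → |ω|^(p-2)` in `L^((p-1)/(p-2))`, the dual exponent of `p - 1`.
Hölder with `1/(p-1) + (p-2)/(p-1) = 1` then gives `ωₙ|ωₙ|^(p-2) → ω|ω|^(p-2)` in `L¹`. This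
sequence is also bounded in `L^(p/(p-1))`, so pairing it with `φ ∈ Lᵖ` converges: approximate `φ`
by a bounded simple function and control the remainder with the uniform bound.
-/

open MeasureTheory Filter Topology
open scoped ENNReal

theorem ENNReal.tendsto_nhds_zero_of_le_const_mul {ι : Type*} {l : Filter ι} {u v : ι → ℝ≥0∞}
    {M : ℝ≥0∞} (hM : M ≠ ∞) (huv : ∀ i, u i ≤ M * v i) (hv : Tendsto v l (𝓝 0)) :
    Tendsto u l (𝓝 0) := by
  have hMv : Tendsto (fun i => M * v i) l (𝓝 0) := by
    simpa using ENNReal.Tendsto.const_mul hv (Or.inr hM)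
  exact tendsto_of_tendsto_of_tendsto_of_le_of_le tendsto_const_nhds hMv (fun _ => zero_le) huv

theorem Real.rpow_sub_rpow_le_rpow_sub {x y α : ℝ} (hy : 0 ≤ y) (hyx : y ≤ x) (hα₀ : 0 ≤ α)
    (hα₁ : α ≤ 1) : x ^ α - y ^ α ≤ (x - y) ^ α := by
  have := Real.rpow_add_le_add_rpow (sub_nonneg.2 hyx) hy hα₀ hα₁
  rw [sub_add_cancel] at this
  linarith

theorem Real.rpow_sub_rpow_le_mul_rpow_sub_one {x y α : ℝ} (hy : 0 ≤ y) (hyx : y ≤ x)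
    (hα : 1 ≤ α) : x ^ α - y ^ α ≤ α * x ^ (α - 1) * (x - y) := by
  rcases hyx.eq_or_lt with rfl | hlt
  · simp
  have := (convexOn_rpow hα).slope_le_of_hasDerivAt hy (hy.trans hlt.le) hlt
    (Real.hasDerivAt_rpow_const (Or.inr hα))
  rwa [slope_def_field, div_le_iff₀ (sub_pos.2 hlt)] at this

theorem abs_abs_rpow_sub_abs_rpow_le {a b α : ℝ} (hα₀ : 0 ≤ α) (hα₁ : α ≤ 1) :
    |(|a| ^ α - |b| ^ α)| ≤ |a - b| ^ α := by
  wlog h : |b| ≤ |a| generalizing a b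
  · rw [abs_sub_comm, abs_sub_comm a]
    exact this (le_of_not_ge h)
  rw [abs_of_nonneg (sub_nonneg.2 (Real.rpow_le_rpow (abs_nonneg b) h hα₀))]
  calc |a| ^ α - |b| ^ α ≤ (|a| - |b|) ^ α :=
        Real.rpow_sub_rpow_le_rpow_sub (abs_nonneg b) h hα₀ hα₁
    _ ≤ |a - b| ^ α :=
        Real.rpow_le_rpow (sub_nonneg.2 h) (abs_sub_abs_le_abs_sub a b) hα₀

theorem abs_abs_rpow_sub_abs_rpow_le_mul {a b α : ℝ} (hα : 1 ≤ α) :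
    |(|a| ^ α - |b| ^ α)| ≤ α * (|a| ^ (α - 1) + |b| ^ (α - 1)) * |a - b| := by
  wlog h : |b| ≤ |a| generalizing a b
  · rw [abs_sub_comm, abs_sub_comm a, add_comm (|a| ^ (α - 1))]
    exact this (le_of_not_ge h)
  have hα₀ : 0 ≤ α := zero_le_one.trans hα
  rw [abs_of_nonneg (sub_nonneg.2 (Real.rpow_le_rpow (abs_nonneg b) h hα₀))]
  calc |a| ^ α - |b| ^ α ≤ α * |a| ^ (α - 1) * (|a| - |b|) :=
        Real.rpow_sub_rpow_le_mul_rpow_sub_one (abs_nonneg b) h hα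
    _ ≤ α * (|a| ^ (α - 1) + |b| ^ (α - 1)) * |a - b| := by
        gcongr
        · exact le_add_of_nonneg_right (by positivity)
        · exact abs_sub_abs_le_abs_sub a b

theorem abs_mul_abs_rpow (a : ℝ) {β : ℝ} (hβ : β + 1 ≠ 0) :
    |a * (|a| ^ β)| = |a| ^ (β + 1) := by
  rw [abs_mul, abs_of_nonneg (Real.rpow_nonneg (abs_nonneg a) β),
    Real.rpow_add_one' (abs_nonneg a) hβ, mul_comm]

section Interpolation

variable {X E ι : Type*} [MeasurableSpace X] {μ : Measure X} [NormedAddCommGroup E] {l : Filter ι}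

theorem eLpNorm_ofReal_rpow_eq_lintegral (f : X → E) {q : ℝ} (hq : 0 < q) :
    eLpNorm f (ENNReal.ofReal q) μ ^ q = ∫⁻ x, ‖f x‖ₑ ^ q ∂μ := by
  rw [eLpNorm_eq_eLpNorm' (by simpa using hq) ENNReal.ofReal_ne_top,
    ENNReal.toReal_ofReal hq.le, lintegral_rpow_enorm_eq_rpow_eLpNorm' hq]

theorem eLpNorm_rpow_le_of_convex_combination {f : X → E} (hf : AEStronglyMeasurable f μ)
    {r s θ q : ℝ} (hr : 0 < r) (hs : 0 < s) (hθ₀ : 0 ≤ θ) (hθ₁ : θ ≤ 1)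
    (hq : θ * r + (1 - θ) * s = q) :
    eLpNorm f (ENNReal.ofReal q) μ ^ q ≤
      eLpNorm f (ENNReal.ofReal r) μ ^ (θ * r) *
        eLpNorm f (ENNReal.ofReal s) μ ^ ((1 - θ) * s) := by
  have hθ₁' : 0 ≤ 1 - θ := sub_nonneg.2 hθ₁
  have hq₀ : 0 < q := by
    rcases hθ₀.eq_or_lt with rfl | hθ
    · simpa [← hq] using hs
    · rw [← hq]; positivity
  rw [eLpNorm_ofReal_rpow_eq_lintegral f hq₀, mul_comm θ, mul_comm (1 - θ), ENNReal.rpow_mul,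
    ENNReal.rpow_mul, eLpNorm_ofReal_rpow_eq_lintegral f hr, eLpNorm_ofReal_rpow_eq_lintegral f hs]
  calc ∫⁻ x, ‖f x‖ₑ ^ q ∂μ = ∫⁻ x, (‖f x‖ₑ ^ r) ^ θ * (‖f x‖ₑ ^ s) ^ (1 - θ) ∂μ := by
        congr 1 with x
        rw [← ENNReal.rpow_mul, ← ENNReal.rpow_mul,
          ← ENNReal.rpow_add_of_nonneg _ _ (by positivity) (by positivity), ← hq, mul_comm θ,
          mul_comm (1 - θ)]
    _ ≤ _ := ENNReal.lintegral_mul_norm_pow_le (hf.enorm.pow_const r) (hf.enorm.pow_const s)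
        hθ₀ hθ₁' (add_sub_cancel θ 1)

theorem eLpNorm_le_of_convex_combination {f : X → E} (hf : AEStronglyMeasurable f μ)
    {r s θ q : ℝ} (hr : 0 < r) (hs : 0 < s) (hθ₀ : 0 ≤ θ) (hθ₁ : θ ≤ 1)
    (hq : θ * r + (1 - θ) * s = q) {B : ℝ≥0∞}
    (hfr : eLpNorm f (ENNReal.ofReal r) μ ≤ B) (hfs : eLpNorm f (ENNReal.ofReal s) μ ≤ B) :
    eLpNorm f (ENNReal.ofReal q) μ ≤ B := by
  have hθ₁' : 0 ≤ 1 - θ := sub_nonneg.2 hθ₁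
  have hq₀ : 0 < q := by
    rcases hθ₀.eq_or_lt with rfl | hθ
    · simpa [← hq] using hs
    · rw [← hq]; positivity
  refine (ENNReal.rpow_le_rpow_iff hq₀).1 ?_
  calc _ ≤ _ := eLpNorm_rpow_le_of_convex_combination hf hr hs hθ₀ hθ₁ hq
    _ ≤ B ^ (θ * r) * B ^ ((1 - θ) * s) := by gcongr
    _ = B ^ q := by rw [← hq, ENNReal.rpow_add_of_nonneg _ _ (by positivity) (by positivity)]

theorem tendsto_eLpNorm_zero_of_convex_combination {f : ι → X → E}
    (hf : ∀ i, AEStronglyMeasurable (f i) μ) {r s θ q : ℝ} (hr : 0 < r) (hs : 0 < s)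
    (hθ₀ : 0 ≤ θ) (hθ₁ : θ < 1) (hq : θ * r + (1 - θ) * s = q) {B : ℝ≥0∞} (hB : B ≠ ∞)
    (hfr : ∀ i, eLpNorm (f i) (ENNReal.ofReal r) μ ≤ B)
    (hfs : Tendsto (fun i => eLpNorm (f i) (ENNReal.ofReal s) μ) l (𝓝 0)) :
    Tendsto (fun i => eLpNorm (f i) (ENNReal.ofReal q) μ) l (𝓝 0) := by
  have hθ₁' : 0 < 1 - θ := sub_pos.2 hθ₁
  have hq₀ : 0 < q := by rw [← hq]; positivity
  have hpow : Tendsto (fun i => eLpNorm (f i) (ENNReal.ofReal q) μ ^ q) l (𝓝 0) := by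
    refine ENNReal.tendsto_nhds_zero_of_le_const_mul (M := B ^ (θ * r))
      (v := fun i => eLpNorm (f i) (ENNReal.ofReal s) μ ^ ((1 - θ) * s))
      (ENNReal.rpow_ne_top_of_nonneg (by positivity) hB) (fun i => ?_) ?_
    · exact (eLpNorm_rpow_le_of_convex_combination (hf i) hr hs hθ₀ hθ₁.le hq).trans
        (by gcongr; exact hfr i)
    · simpa [ENNReal.zero_rpow_of_pos (mul_pos hθ₁' hs)] using hfs.ennrpow_const ((1 - θ) * s)
  simpa [← ENNReal.rpow_mul, mul_inv_cancel₀ hq₀.ne', ENNReal.zero_rpow_of_pos (inv_pos.2 hq₀)]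
    using hpow.ennrpow_const q⁻¹

theorem tendsto_eLpNorm_zero_of_tendsto_eLpNorm_two {f : ι → X → E}
    (hf : ∀ i, AEStronglyMeasurable (f i) μ) {p q : ℝ} (hq : 1 < q) (hqp : q < p)
    {B : ℝ≥0∞} (hB : B ≠ ∞) (hf₁ : ∀ i, eLpNorm (f i) 1 μ ≤ B)
    (hfp : ∀ i, eLpNorm (f i) (ENNReal.ofReal p) μ ≤ B)
    (hf₂ : Tendsto (fun i => eLpNorm (f i) 2 μ) l (𝓝 0)) :
    Tendsto (fun i => eLpNorm (f i) (ENNReal.ofReal q) μ) l (𝓝 0) := by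
  rw [← ENNReal.ofReal_ofNat 2] at hf₂
  rcases le_total q 2 with hq₂ | hq₂
  · exact tendsto_eLpNorm_zero_of_convex_combination hf one_pos two_pos (θ := 2 - q)
      (by linarith) (by linarith) (by ring) hB (by simpa using hf₁) hf₂
  · have hp₂ : p - 2 ≠ 0 := by linarith
    exact tendsto_eLpNorm_zero_of_convex_combination hf (by linarith) two_pos
      (θ := (q - 2) / (p - 2)) (div_nonneg (by linarith) (by linarith))
      ((div_lt_one (by linarith)).2 (by linarith)) (by field_simp; ring) hB hfp hf₂

end Interpolation

section Lp

variable {X : Type*} [MeasurableSpace X] {μ : Measure X}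

theorem MeasureTheory.AEStronglyMeasurable.abs_rpow_const {f : X → ℝ}
    (hf : AEStronglyMeasurable f μ) (α : ℝ) : AEStronglyMeasurable (fun x => |f x| ^ α) μ :=
  (hf.aemeasurable.abs.pow_const α).aestronglyMeasurable

theorem eLpNorm_mul_le_mul_eLpNorm {f g : X → ℝ} {p q r : ℝ≥0∞} [ENNReal.HolderTriple p q r]
    (hf : AEStronglyMeasurable f μ) (hg : AEStronglyMeasurable g μ) :
    eLpNorm (fun x => f x * g x) r μ ≤ eLpNorm f p μ * eLpNorm g q μ := by
  simpa using eLpNorm_le_eLpNorm_mul_eLpNorm'_of_norm hf hg (· * ·) 1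
    (.of_forall fun x => by simp)

theorem eLpNorm_abs_rpow (f : X → ℝ) {α : ℝ} (hα : 0 < α) (q : ℝ) :
    eLpNorm (fun x => |f x| ^ α) (ENNReal.ofReal (q / α)) μ =
      eLpNorm f (ENNReal.ofReal q) μ ^ α := by
  simpa [← ENNReal.ofReal_mul' hα.le, div_mul_cancel₀ _ hα.ne'] using
    eLpNorm_norm_rpow f hα (p := ENNReal.ofReal (q / α)) (μ := μ)

theorem eLpNorm_mul_abs_rpow (f : X → ℝ) {β : ℝ} (hβ : 0 < β + 1) (q : ℝ) :
    eLpNorm (fun x => f x * |f x| ^ β) (ENNReal.ofReal (q / (β + 1))) μ =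
      eLpNorm f (ENNReal.ofReal q) μ ^ (β + 1) := by
  rw [← eLpNorm_abs_rpow f hβ]
  exact eLpNorm_congr_norm_ae (.of_forall fun x => by
    rw [Real.norm_eq_abs, Real.norm_eq_abs, abs_mul_abs_rpow _ hβ.ne',
      abs_of_nonneg (Real.rpow_nonneg (abs_nonneg _) _)])

theorem eLpNorm_abs_rpow_sub_abs_rpow_le (f g : X → ℝ) {α : ℝ} (hα₀ : 0 < α) (hα₁ : α ≤ 1)
    (q : ℝ) :
    eLpNorm (fun x => |f x| ^ α - |g x| ^ α) (ENNReal.ofReal (q / α)) μ ≤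
      eLpNorm (f - g) (ENNReal.ofReal q) μ ^ α := by
  rw [← eLpNorm_abs_rpow _ hα₀]
  exact eLpNorm_mono_real fun x => abs_abs_rpow_sub_abs_rpow_le hα₀.le hα₁

theorem eLpNorm_abs_rpow_sub_abs_rpow_le_mul {f g : X → ℝ} (hf : AEStronglyMeasurable f μ)
    (hg : AEStronglyMeasurable g μ) {α : ℝ} (hα : 1 < α) {q : ℝ} (hq : 0 < q) :
    eLpNorm (fun x => |f x| ^ α - |g x| ^ α) (ENNReal.ofReal (q / α)) μ ≤
      ENNReal.ofReal α * (eLpNorm (fun x => |f x| ^ (α - 1) + |g x| ^ (α - 1))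
        (ENNReal.ofReal (q / (α - 1))) μ * eLpNorm (f - g) (ENNReal.ofReal q) μ) := by
  have hα₁ : 0 < α - 1 := sub_pos.2 hα
  have : ENNReal.HolderTriple (ENNReal.ofReal (q / (α - 1))) (ENNReal.ofReal q)
      (ENNReal.ofReal (q / α)) :=
    Real.HolderTriple.ennrealOfReal ⟨by field_simp; ring, by positivity, hq⟩
  set S := fun x => |f x| ^ (α - 1) + |g x| ^ (α - 1)
  calc eLpNorm (fun x => |f x| ^ α - |g x| ^ α) (ENNReal.ofReal (q / α)) μ
      ≤ eLpNorm (α • fun x => S x * (f - g) x) (ENNReal.ofReal (q / α)) μ :=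
        eLpNorm_mono fun x => by
          simpa [S, abs_mul, abs_of_pos (zero_lt_one.trans hα), mul_assoc,
            abs_of_nonneg (by positivity : 0 ≤ S x)] using
            abs_abs_rpow_sub_abs_rpow_le_mul (a := f x) (b := g x) hα.le
    _ ≤ ENNReal.ofReal α * (eLpNorm S (ENNReal.ofReal (q / (α - 1))) μ *
          eLpNorm (f - g) (ENNReal.ofReal q) μ) := by
        rw [eLpNorm_const_smul, Real.enorm_of_nonneg (zero_lt_one.trans hα).le]
        gcongr
        exact eLpNorm_mul_le_mul_eLpNorm ((hf.abs_rpow_const _).add (hg.abs_rpow_const _))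
          (hf.sub hg)

end Lp

section Convergence

variable {X ι : Type*} [MeasurableSpace X] {μ : Measure X} {l : Filter ι}

theorem tendsto_eLpNorm_abs_rpow_sub_abs_rpow {f : ι → X → ℝ} {g : X → ℝ}
    (hf : ∀ i, AEStronglyMeasurable (f i) μ) (hg : AEStronglyMeasurable g μ) {α q : ℝ}
    (hα : 0 < α) (hq : 0 < q) {B : ℝ≥0∞} (hB : B ≠ ∞)
    (hfB : ∀ i, eLpNorm (f i) (ENNReal.ofReal q) μ ≤ B) (hgB : eLpNorm g (ENNReal.ofReal q) μ ≤ B)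
    (hlim : Tendsto (fun i => eLpNorm (f i - g) (ENNReal.ofReal q) μ) l (𝓝 0)) :
    Tendsto (fun i => eLpNorm (fun x => |f i x| ^ α - |g x| ^ α) (ENNReal.ofReal (q / α)) μ) l
      (𝓝 0) := by
  rcases le_or_gt α 1 with hα₁ | hα₁
  · have hpow := hlim.ennrpow_const α
    rw [ENNReal.zero_rpow_of_pos hα] at hpow
    exact tendsto_of_tendsto_of_tendsto_of_le_of_le tendsto_const_nhds hpow (fun _ => zero_le)
      fun i => eLpNorm_abs_rpow_sub_abs_rpow_le (f i) g hα hα₁ q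
  · have hα₁' : 0 < α - 1 := sub_pos.2 hα₁
    set c := ENNReal.LpAddConst (ENNReal.ofReal (q / (α - 1)))
    have hc : c ≠ ∞ := (ENNReal.LpAddConst_lt_top _).ne
    have hBα : B ^ (α - 1) ≠ ∞ := ENNReal.rpow_ne_top_of_nonneg hα₁'.le hB
    refine ENNReal.tendsto_nhds_zero_of_le_const_mul
      (M := ENNReal.ofReal α * (c * (B ^ (α - 1) + B ^ (α - 1)))) (by finiteness) (fun i => ?_) hlim
    refine (eLpNorm_abs_rpow_sub_abs_rpow_le_mul (hf i) hg hα₁ hq).trans ?_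
    rw [← mul_assoc]
    gcongr
    refine (eLpNorm_add_le' ((hf i).abs_rpow_const _) (hg.abs_rpow_const _) _).trans ?_
    rw [eLpNorm_abs_rpow _ hα₁', eLpNorm_abs_rpow _ hα₁']
    gcongr
    exact hfB i

theorem tendsto_eLpNorm_mul_sub_mul {a b : ι → X → ℝ} {a₀ b₀ : X → ℝ} {r s t : ℝ≥0∞}
    [ENNReal.HolderTriple r s t] (ht : 1 ≤ t) (ha : ∀ i, AEStronglyMeasurable (a i) μ)
    (ha₀ : AEStronglyMeasurable a₀ μ) (hb : ∀ i, AEStronglyMeasurable (b i) μ)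
    (hb₀ : MemLp b₀ s μ) {A : ℝ≥0∞} (hA : A ≠ ∞) (haA : ∀ i, eLpNorm (a i) r μ ≤ A)
    (ha_lim : Tendsto (fun i => eLpNorm (a i - a₀) r μ) l (𝓝 0))
    (hb_lim : Tendsto (fun i => eLpNorm (b i - b₀) s μ) l (𝓝 0)) :
    Tendsto (fun i => eLpNorm (fun x => a i x * b i x - a₀ x * b₀ x) t μ) l (𝓝 0) := by
  have hsum : Tendsto (fun i => A * eLpNorm (b i - b₀) s μ + eLpNorm (a i - a₀) r μ *
      eLpNorm b₀ s μ) l (𝓝 0) := by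
    simpa using (ENNReal.Tendsto.const_mul hb_lim (Or.inr hA)).add
      (ENNReal.Tendsto.mul_const ha_lim (Or.inr hb₀.eLpNorm_ne_top))
  refine tendsto_of_tendsto_of_tendsto_of_le_of_le tendsto_const_nhds hsum (fun _ => zero_le)
    fun i => ?_
  have hsplit : (fun x => a i x * b i x - a₀ x * b₀ x) =
      (fun x => a i x * (b i - b₀) x) + fun x => (a i - a₀) x * b₀ x := by
    ext x; simp only [Pi.add_apply, Pi.sub_apply]; ring
  rw [hsplit]
  refine (eLpNorm_add_le ((ha i).mul ((hb i).sub hb₀.1)) (((ha i).sub ha₀).mul hb₀.1) ht).trans ?_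
  gcongr
  · exact (eLpNorm_mul_le_mul_eLpNorm (ha i) ((hb i).sub hb₀.1)).trans (by gcongr; exact haA i)
  · exact eLpNorm_mul_le_mul_eLpNorm ((ha i).sub ha₀) hb₀.1

theorem tendsto_eLpNorm_one_mul_of_tendsto_eLpNorm_one {h : ι → X → ℝ} {φ : X → ℝ} {q r : ℝ≥0∞}
    [ENNReal.HolderConjugate q r] (hr : r ≠ ∞) (hh : ∀ i, AEStronglyMeasurable (h i) μ)
    {D : ℝ≥0∞} (hD : D ≠ ∞) (hhD : ∀ i, eLpNorm (h i) q μ ≤ D)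
    (hlim : Tendsto (fun i => eLpNorm (h i) 1 μ) l (𝓝 0)) (hφ : MemLp φ r μ) :
    Tendsto (fun i => eLpNorm (fun x => h i x * φ x) 1 μ) l (𝓝 0) := by
  rw [ENNReal.tendsto_nhds_zero]
  intro ε hε
  obtain ⟨ψ, hψ, -⟩ := hφ.exists_simpleFunc_eLpNorm_sub_lt hr (ε := ε / 2 / D)
    (by simp [hD, hε.ne'])
  have hψ_top : eLpNorm ψ ∞ μ ≠ ∞ := (ψ.memLp_top μ).eLpNorm_ne_top
  have hsmall : ∀ᶠ i in l, eLpNorm (h i) 1 μ * eLpNorm ψ ∞ μ ≤ ε / 2 := by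
    refine ENNReal.tendsto_nhds_zero.1 ?_ _ (ENNReal.half_pos hε.ne')
    simpa using ENNReal.Tendsto.mul_const hlim (Or.inr hψ_top)
  filter_upwards [hsmall] with i hi
  have hsplit : (fun x => h i x * φ x) = (fun x => h i x * ψ x) + fun x => h i x * (φ - ⇑ψ) x := by
    ext x; simp only [Pi.add_apply, Pi.sub_apply]; ring
  calc eLpNorm (fun x => h i x * φ x) 1 μ
      ≤ eLpNorm (fun x => h i x * ψ x) 1 μ + eLpNorm (fun x => h i x * (φ - ⇑ψ) x) 1 μ := by
        rw [hsplit]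
        exact eLpNorm_add_le ((hh i).mul ψ.aestronglyMeasurable)
          ((hh i).mul (hφ.1.sub ψ.aestronglyMeasurable)) le_rfl
    _ ≤ eLpNorm (h i) 1 μ * eLpNorm ψ ∞ μ + eLpNorm (h i) q μ * eLpNorm (φ - ⇑ψ) r μ :=
        add_le_add (eLpNorm_mul_le_mul_eLpNorm (hh i) ψ.aestronglyMeasurable)
          (eLpNorm_mul_le_mul_eLpNorm (hh i) (hφ.1.sub ψ.aestronglyMeasurable))
    _ ≤ ε / 2 + D * (ε / 2 / D) := add_le_add hi (mul_le_mul' (hhD i) hψ.le)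
    _ ≤ ε := by
        calc ε / 2 + D * (ε / 2 / D) ≤ ε / 2 + ε / 2 := by gcongr; exact ENNReal.mul_div_le
          _ = ε := ENNReal.add_halves ε

theorem tendsto_integral_mul_of_tendsto_eLpNorm_one {g : ι → X → ℝ} {g₀ φ : X → ℝ}
    {q r : ℝ≥0∞} [ENNReal.HolderConjugate q r] (hr : r ≠ ∞)
    (hg : ∀ i, AEStronglyMeasurable (g i) μ) {D : ℝ≥0∞} (hD : D ≠ ∞)
    (hgD : ∀ i, eLpNorm (g i) q μ ≤ D) (hg₀ : MemLp g₀ q μ)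
    (hlim : Tendsto (fun i => eLpNorm (g i - g₀) 1 μ) l (𝓝 0)) (hφ : MemLp φ r μ) :
    Tendsto (fun i => ∫ x, g i x * φ x ∂μ) l (𝓝 (∫ x, g₀ x * φ x ∂μ)) := by
  have hq : 1 ≤ q := ENNReal.HolderConjugate.one_le q r
  have hmem : ∀ i, MemLp (g i) q μ := fun i => ⟨hg i, (hgD i).trans_lt hD.lt_top⟩
  refine tendsto_integral_of_L1' _ (hg₀.1.mul hφ.1)
    (.of_forall fun i => memLp_one_iff_integrable.1 (hφ.mul' (hmem i))) ?_
  have := tendsto_eLpNorm_one_mul_of_tendsto_eLpNorm_one hr (fun i => (hg i).sub hg₀.1)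
    (ENNReal.add_ne_top.2 ⟨hD, hg₀.eLpNorm_ne_top⟩)
    (fun i => (eLpNorm_sub_le (hg i) hg₀.1 hq).trans (by gcongr; exact hgD i)) hlim hφ
  refine this.congr fun i => congrArg (eLpNorm · 1 μ) ?_
  ext x
  simp only [Pi.sub_apply, Pi.mul_apply, sub_mul]

theorem tendsto_integral_mul_abs_rpow_mul {p : ℝ} (hp : 2 < p) {f : ι → X → ℝ} {g φ : X → ℝ}
    (hf : ∀ i, AEStronglyMeasurable (f i) μ) (hg : AEStronglyMeasurable g μ) {B : ℝ≥0∞}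
    (hB : B ≠ ∞) (hfp : ∀ i, eLpNorm (f i) (ENNReal.ofReal p) μ ≤ B)
    (hgp : eLpNorm g (ENNReal.ofReal p) μ ≤ B)
    (hfq : ∀ i, eLpNorm (f i) (ENNReal.ofReal (p - 1)) μ ≤ B)
    (hgq : eLpNorm g (ENNReal.ofReal (p - 1)) μ ≤ B)
    (hlim : Tendsto (fun i => eLpNorm (f i - g) (ENNReal.ofReal (p - 1)) μ) l (𝓝 0))
    (hφ : MemLp φ (ENNReal.ofReal p) μ) :
    Tendsto (fun i => ∫ x, f i x * |f i x| ^ (p - 2) * φ x ∂μ) l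
      (𝓝 (∫ x, g x * |g x| ^ (p - 2) * φ x ∂μ)) := by
  have hp₁ : 0 < p - 1 := by linarith
  have hp₂ : 0 < p - 2 := by linarith
  have : ENNReal.HolderConjugate (ENNReal.ofReal (p - 1)) (ENNReal.ofReal ((p - 1) / (p - 2))) :=
    ((Real.holderConjugate_iff_eq_conjExponent (by linarith)).2 (by ring)).ennrealOfReal
  have : ENNReal.HolderConjugate (ENNReal.ofReal (p / (p - 1))) (ENNReal.ofReal p) :=
    ((Real.holderConjugate_iff_eq_conjExponent (by linarith)).2 rfl).symm.ennrealOfReal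
  have hpow := tendsto_eLpNorm_abs_rpow_sub_abs_rpow hf hg hp₂ hp₁ hB hfq hgq hlim
  have habs : MemLp (fun x => |g x| ^ (p - 2)) (ENNReal.ofReal ((p - 1) / (p - 2))) μ := by
    refine ⟨hg.abs_rpow_const _, ?_⟩
    rw [eLpNorm_abs_rpow _ hp₂]
    exact ENNReal.rpow_lt_top_of_nonneg hp₂.le (hgq.trans_lt hB.lt_top).ne
  have hprod := tendsto_eLpNorm_mul_sub_mul le_rfl hf hg (fun i => (hf i).abs_rpow_const _) habs
    hB hfq hlim hpow
  have hnorm : ∀ h : X → ℝ, eLpNorm (fun x => h x * |h x| ^ (p - 2))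
      (ENNReal.ofReal (p / (p - 1))) μ = eLpNorm h (ENNReal.ofReal p) μ ^ (p - 1) := by
    intro h
    have := eLpNorm_mul_abs_rpow h (μ := μ) (β := p - 2) (by linarith) p
    rwa [show p - 2 + 1 = p - 1 by ring] at this
  refine tendsto_integral_mul_of_tendsto_eLpNorm_one (q := ENNReal.ofReal (p / (p - 1)))
    ENNReal.ofReal_ne_top (fun i => (hf i).mul ((hf i).abs_rpow_const _)) (D := B ^ (p - 1))
    (ENNReal.rpow_ne_top_of_nonneg hp₁.le hB) (fun i => ?_) ⟨hg.mul (hg.abs_rpow_const _), ?_⟩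
    hprod hφ
  · rw [hnorm]
    gcongr
    exact hfp i
  · rw [hnorm]
    exact ENNReal.rpow_lt_top_of_nonneg hp₁.le (hgp.trans_lt hB.lt_top).ne

end Convergence

theorem weak_limit_identification_general
    (p : ℝ) (hp : 2 < p)
    (ωn : ℕ → EuclideanSpace ℝ (Fin 2) → ℝ) (ω : EuclideanSpace ℝ (Fin 2) → ℝ)
    (hmem1 : ∀ n, MemLp (ωn n) 1 volume)
    (hω1 : MemLp ω 1 volume) (hωp : MemLp ω (ENNReal.ofReal p) volume)
    (C : ENNReal) (hC : C < ⊤)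
    (hb1 : ∀ n, eLpNorm (ωn n) 1 volume ≤ C)
    (hbp : ∀ n, eLpNorm (ωn n) (ENNReal.ofReal p) volume ≤ C)
    (hL2 : Tendsto (fun n => eLpNorm (ωn n - ω) 2 volume) atTop (𝓝 0)) :
    Tendsto (fun n => eLpNorm
        (fun x => |ωn n x| ^ (p - 2) - |ω x| ^ (p - 2))
        (ENNReal.ofReal ((p - 1) / (p - 2))) volume) atTop (𝓝 0) ∧
      ((∀ φ : EuclideanSpace ℝ (Fin 2) → ℝ,
          MemLp φ (ENNReal.ofReal ((p - 1) / (p - 2))) volume →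
          Tendsto (fun n => ∫ x, ωn n x * φ x) atTop (𝓝 (∫ x, ω x * φ x))) →
        ∀ φ : EuclideanSpace ℝ (Fin 2) → ℝ, MemLp φ (ENNReal.ofReal p) volume →
          Tendsto (fun n => ∫ x, ωn n x * |ωn n x| ^ (p - 2) * φ x) atTop
            (𝓝 (∫ x, ω x * |ω x| ^ (p - 2) * φ x))) := by
  have hmeas : ∀ n, AEStronglyMeasurable (ωn n) volume := fun n => (hmem1 n).1
  set B := max C (max (eLpNorm ω 1 volume) (eLpNorm ω (ENNReal.ofReal p) volume))
  have hB : B ≠ ∞ := by simp [B, hC.ne, hω1.eLpNorm_ne_top, hωp.eLpNorm_ne_top]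
  have hωnB : ∀ n, eLpNorm (ωn n) 1 volume ≤ B ∧ eLpNorm (ωn n) (ENNReal.ofReal p) volume ≤ B :=
    fun n => ⟨(hb1 n).trans (le_max_left _ _), (hbp n).trans (le_max_left _ _)⟩
  have hωB : eLpNorm ω 1 volume ≤ B ∧ eLpNorm ω (ENNReal.ofReal p) volume ≤ B :=
    ⟨(le_max_left _ _).trans (le_max_right _ _), (le_max_right _ _).trans (le_max_right _ _)⟩
  have hp₁ : 0 < p - 1 := by linarith
  have interpolate : ∀ f : EuclideanSpace ℝ (Fin 2) → ℝ, AEStronglyMeasurable f volume →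
      eLpNorm f 1 volume ≤ B ∧ eLpNorm f (ENNReal.ofReal p) volume ≤ B →
      eLpNorm f (ENNReal.ofReal (p - 1)) volume ≤ B := fun f hf h =>
    eLpNorm_le_of_convex_combination hf one_pos (by linarith) (θ := 1 / (p - 1)) (by positivity)
      ((div_le_one hp₁).2 (by linarith)) (by field_simp; ring) (by simpa using h.1) h.2
  have hdiff : Tendsto (fun n => eLpNorm (ωn n - ω) (ENNReal.ofReal (p - 1)) volume) atTop
      (𝓝 0) :=
    tendsto_eLpNorm_zero_of_tendsto_eLpNorm_two (fun n => (hmeas n).sub hω1.1) (by linarith)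
      (by linarith) (B := B + B) (by finiteness)
      (fun n => (eLpNorm_sub_le (hmeas n) hω1.1 le_rfl).trans (add_le_add (hωnB n).1 hωB.1))
      (fun n => (eLpNorm_sub_le (hmeas n) hω1.1 (ENNReal.one_le_ofReal.2 (by linarith))).trans
        (add_le_add (hωnB n).2 hωB.2)) hL2
  have hωnq := fun n => interpolate _ (hmeas n) (hωnB n)
  have hωq := interpolate _ hω1.1 hωB
  exact ⟨tendsto_eLpNorm_abs_rpow_sub_abs_rpow hmeas hω1.1 (by linarith) hp₁ hB hωnq hωq hdiff,
    fun _ φ hφ => tendsto_integral_mul_abs_rpow_mul hp hmeas hω1.1 hB (fun n => (hωnB n).2) hωB.2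
      hωnq hωq hdiff hφ⟩

theorem weak_limit_identification
    (p : ℝ) (hp : 2 < p)
    (ωn : ℕ → EuclideanSpace ℝ (Fin 2) → ℝ) (ω : EuclideanSpace ℝ (Fin 2) → ℝ)
    (hmem1 : ∀ n, MemLp (ωn n) 1 volume)
    (hmemp : ∀ n, MemLp (ωn n) (ENNReal.ofReal p) volume)
    (hω1 : MemLp ω 1 volume) (hωp : MemLp ω (ENNReal.ofReal p) volume)
    (C : ENNReal) (hC : C < ⊤)
    (hb1 : ∀ n, eLpNorm (ωn n) 1 volume ≤ C)
    (hbp : ∀ n, eLpNorm (ωn n) (ENNReal.ofReal p) volume ≤ C)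
    (hL2 : Tendsto (fun n => eLpNorm (ωn n - ω) 2 volume) atTop (𝓝 0)) :
    Tendsto (fun n => eLpNorm
        (fun x => |ωn n x| ^ (p - 2) - |ω x| ^ (p - 2))
        (ENNReal.ofReal ((p - 1) / (p - 2))) volume) atTop (𝓝 0) ∧
      ((∀ φ : EuclideanSpace ℝ (Fin 2) → ℝ,
          MemLp φ (ENNReal.ofReal ((p - 1) / (p - 2))) volume →
          Tendsto (fun n => ∫ x, ωn n x * φ x) atTop (𝓝 (∫ x, ω x * φ x))) →
        ∀ φ : EuclideanSpace ℝ (Fin 2) → ℝ, MemLp φ (ENNReal.ofReal p) volume →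
          Tendsto (fun n => ∫ x, ωn n x * |ωn n x| ^ (p - 2) * φ x) atTop
            (𝓝 (∫ x, ω x * |ω x| ^ (p - 2) * φ x))) :=
  weak_limit_identification_general p hp ωn ω hmem1 hω1 hωp C hC hb1 hbp hL2
end
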